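/- Let f ∈ ℂ[x,y]_d be a nonzero binary form of degree d ≥ 1 and let f_x = ∂f/∂x. If FR(f) > FR(f_x), then WR(f) = FR(f_x) + 1. -/

import Mathlib

open MvPolynomial

/-- The linear form `x + β y` in `ℂ[x,y]`. -/
noncomputable def linForm (β : ℂ) : MvPolynomial (Fin 2) ℂ := X 0 + C β * X 1

/-- The Waring rank of a binary form `f ∈ ℂ[x,y]_d`: the least `r` such that
`f = Σ_{k=1}^{r} λ_k L_k^d` with all `λ_k ∈ ℂ∖{0}` and `L_k` linear forms. -/
noncomputable def waringRank (d : ℕ) (f : MvPolynomial (Fin 2) ℂ) : ℕ :=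
  sInf {r : ℕ | ∃ (lam : Fin r → ℂ) (L : Fin r → MvPolynomial (Fin 2) ℂ),
    (∀ k, lam k ≠ 0) ∧ (∀ k, (L k).IsHomogeneous 1) ∧ f = ∑ k, C (lam k) * (L k) ^ d}

/-- The F-rank of a binary form `f ∈ ℂ[x,y]_d`: the least `r ≥ 0` such that
`f = Σ_{k=1}^{r} λ_k (x+β_k y)^d` for some `λ_k, β_k ∈ ℂ`. -/
noncomputable def fRank (d : ℕ) (f : MvPolynomial (Fin 2) ℂ) : ℕ :=
  sInf {r : ℕ | ∃ lam β : Fin r → ℂ, f = ∑ k, C (lam k) * (linForm (β k)) ^ d}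

/-!
Write `r = FR(f_x)` and `f_x = ∑ λ_k (x + β_k y)^(d-1)`. Integrating in `x`, the form
`f - ∑ (λ_k / d) (x + β_k y)^d` has vanishing `x`-derivative, so it is `c y^d`, and `WR(f) ≤ r + 1`.
Conversely, take a decomposition `f = ∑ μ_k L_k^d` with `s` terms, `L_k = a_k x + b_k y`. If
every `a_k ≠ 0`, rescaling gives `FR(f) ≤ s`; otherwise some `L_k` is a multiple of `y` and drops
out of `f_x = ∑ d μ_k a_k L_k^(d-1)`, so `FR(f_x) < s`. As `FR(f_x) < FR(f)`, either way `r < s`.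
-/

open Finset

namespace MvPolynomial

variable {R σ : Type*} [CommSemiring R]

lemma IsHomogeneous.exists_eq_C_mul_X_zero_add_C_mul_X_one {L : MvPolynomial (Fin 2) R}
    (hL : L.IsHomogeneous 1) : ∃ a b : R, L = C a * X 0 + C b * X 1 := by
  rw [← mem_homogeneousSubmodule, homogeneousSubmodule_one_eq_span_X,
    Submodule.mem_span_range_iff_exists_fun] at hL
  obtain ⟨c, hc⟩ := hL
  exact ⟨c 0, c 1, by simp [← hc, Fin.sum_univ_two, smul_eq_C_mul]⟩

lemma coeff_eq_zero_of_pderiv_eq_zero [CharZero R] [NoZeroDivisors R] {p : MvPolynomial σ R}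
    {i : σ} (h : pderiv i p = 0) {m : σ →₀ ℕ} (hm : m i ≠ 0) : coeff m p = 0 := by
  have hsplit : m - Finsupp.single i 1 + Finsupp.single i 1 = m := by
    ext j
    by_cases hj : j = i
    · subst hj; simp; omega
    · simp [Ne.symm hj]
  have := coeff_pderiv (i := i) p (m - Finsupp.single i 1)
  rw [h, hsplit, coeff_zero, eq_comm, mul_eq_zero] at this
  exact this.resolve_right (Nat.cast_add_one_ne_zero _)

lemma IsHomogeneous.eq_C_mul_X_one_pow_of_pderiv_zero_eq_zero [CharZero R] [NoZeroDivisors R]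
    {p : MvPolynomial (Fin 2) R} {d : ℕ} (hp : p.IsHomogeneous d) (h : pderiv 0 p = 0) :
    p = C (coeff (Finsupp.single 1 d) p) * X 1 ^ d := by
  ext m
  rw [coeff_C_mul, coeff_X_pow]
  split_ifs with hm
  · rw [hm, mul_one]
  · rw [mul_zero]
    by_contra hne
    have hm0 : m 0 = 0 := by
      by_contra hm0
      exact hne (coeff_eq_zero_of_pderiv_eq_zero h hm0)
    have hdeg : m 0 + m 1 = d := by
      simpa [Finsupp.weight_apply, Finsupp.sum_fintype, Fin.sum_univ_two] using hp hne
    apply hm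
    ext j
    fin_cases j <;> simp <;> omega

lemma exists_sum_C_mul_eq_sum_of_ne_zero [DecidableEq R] {r : ℕ}
    (c : Fin r → R) (v : Fin r → MvPolynomial σ R) :
    ∃ e : Fin (#{k | c k ≠ 0}) → Fin r,
      (∀ i, c (e i) ≠ 0) ∧ ∑ k, C (c k) * v k = ∑ i, C (c (e i)) * v (e i) := by
  let s : Finset (Fin r) := {k | c k ≠ 0}
  refine ⟨fun i => s.equivFin.symm i, fun i => (mem_filter.1 (s.equivFin.symm i).2).2, ?_⟩
  rw [Equiv.sum_comp s.equivFin.symm (fun k => C (c k) * v k),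
    sum_coe_sort s fun k => C (c k) * v k, sum_filter_of_ne fun k _ hk hck => by simp [hck] at hk]

end MvPolynomial

section linForm

variable {d : ℕ} {β μ a b : ℂ}

lemma isHomogeneous_linForm (β : ℂ) : (linForm β).IsHomogeneous 1 :=
  (isHomogeneous_X _ _).add (isHomogeneous_C_mul_X _ _)

lemma pderiv_zero_linForm (β : ℂ) : pderiv 0 (linForm β) = 1 := by
  simp [linForm, pderiv_X]

lemma pderiv_zero_C_mul_linForm_pow :
    pderiv 0 (C μ * linForm β ^ d) = C (μ * d) * linForm β ^ (d - 1) := by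
  rw [pderiv_C_mul, pderiv_pow, pderiv_zero_linForm, mul_one, ← map_natCast C d, map_mul]
  ring

lemma pderiv_zero_sum_C_mul_linForm_pow {r : ℕ} (lam β : Fin r → ℂ) :
    pderiv 0 (∑ k, C (lam k) * linForm (β k) ^ d) =
      ∑ k, C (lam k * d) * linForm (β k) ^ (d - 1) := by
  simp only [map_sum, pderiv_zero_C_mul_linForm_pow]

lemma C_mul_X_zero_add_C_mul_X_one_eq (ha : a ≠ 0) :
    C a * X 0 + C b * X 1 = C a * linForm (b / a) := by
  rw [linForm, mul_add, ← mul_assoc, ← map_mul, mul_div_cancel₀ _ ha]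

lemma C_mul_linear_pow_eq (ha : a ≠ 0) :
    C μ * (C a * X 0 + C b * X 1) ^ d = C (μ * a ^ d) * linForm (b / a) ^ d := by
  rw [C_mul_X_zero_add_C_mul_X_one_eq ha, mul_pow, ← map_pow, ← mul_assoc, ← map_mul]

lemma pderiv_zero_C_mul_linear_pow (hd : d ≠ 0) :
    pderiv 0 (C μ * (C a * X 0 + C b * X 1) ^ d) =
      C (μ * a ^ d * d) * linForm (b / a) ^ (d - 1) := by
  rcases eq_or_ne a 0 with rfl | ha
  -- both sides vanish, whatever the junk value `b / 0` is
  · simp [pderiv_X, zero_pow hd]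
  · rw [C_mul_linear_pow_eq ha, pderiv_zero_C_mul_linForm_pow]

end linForm

section rank

variable {d r : ℕ} {f : MvPolynomial (Fin 2) ℂ}

lemma fRank_le_card_filter_ne_zero (lam β : Fin r → ℂ)
    (hf : f = ∑ k, C (lam k) * linForm (β k) ^ d) : fRank d f ≤ #{k | lam k ≠ 0} := by
  obtain ⟨e, -, he⟩ := exists_sum_C_mul_eq_sum_of_ne_zero lam fun k => linForm (β k) ^ d
  exact Nat.sInf_le ⟨lam ∘ e, β ∘ e, hf.trans he⟩

lemma fRank_lt_of_eq_sum_of_eq_zero (lam β : Fin r → ℂ)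
    (hf : f = ∑ k, C (lam k) * linForm (β k) ^ d) {j : Fin r} (hj : lam j = 0) : fRank d f < r :=
  (fRank_le_card_filter_ne_zero lam β hf).trans_lt <| by
    simpa using card_lt_card (filter_ssubset.2 ⟨j, mem_univ j, not_not.2 hj⟩)

lemma exists_eq_sum_fRank (h : ∃ r, ∃ lam β : Fin r → ℂ, f = ∑ k, C (lam k) * linForm (β k) ^ d) :
    ∃ lam β : Fin (fRank d f) → ℂ, f = ∑ k, C (lam k) * linForm (β k) ^ d :=
  Nat.sInf_mem h

lemma exists_waring_sum_le_of_eq_sum (c : Fin r → ℂ) (L : Fin r → MvPolynomial (Fin 2) ℂ)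
    (hL : ∀ k, (L k).IsHomogeneous 1) (hf : f = ∑ k, C (c k) * L k ^ d) :
    ∃ m ≤ r, ∃ (lam : Fin m → ℂ) (L' : Fin m → MvPolynomial (Fin 2) ℂ),
      (∀ k, lam k ≠ 0) ∧ (∀ k, (L' k).IsHomogeneous 1) ∧ f = ∑ k, C (lam k) * L' k ^ d := by
  obtain ⟨e, hc, he⟩ := exists_sum_C_mul_eq_sum_of_ne_zero c fun k => L k ^ d
  exact ⟨_, card_le_univ _ |>.trans_eq (card_fin r), c ∘ e, L ∘ e, hc, fun i => hL (e i),
    hf.trans he⟩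

lemma waringRank_le_of_eq_sum (c : Fin r → ℂ) (L : Fin r → MvPolynomial (Fin 2) ℂ)
    (hL : ∀ k, (L k).IsHomogeneous 1) (hf : f = ∑ k, C (c k) * L k ^ d) : waringRank d f ≤ r :=
  have ⟨_, hm, hmem⟩ := exists_waring_sum_le_of_eq_sum c L hL hf
  (Nat.sInf_le hmem).trans hm

lemma exists_eq_sum_waringRank_of_eq_sum (c : Fin r → ℂ) (L : Fin r → MvPolynomial (Fin 2) ℂ)
    (hL : ∀ k, (L k).IsHomogeneous 1) (hf : f = ∑ k, C (c k) * L k ^ d) :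
    ∃ (mu : Fin (waringRank d f) → ℂ) (L' : Fin (waringRank d f) → MvPolynomial (Fin 2) ℂ),
      (∀ k, mu k ≠ 0) ∧ (∀ k, (L' k).IsHomogeneous 1) ∧ f = ∑ k, C (mu k) * L' k ^ d :=
  Nat.sInf_mem <| (exists_waring_sum_le_of_eq_sum c L hL hf).imp fun _ h => h.2

lemma fRank_le_or_fRank_pderiv_lt (hd : d ≠ 0) (mu : Fin r → ℂ) (L : Fin r → MvPolynomial (Fin 2) ℂ)
    (hL : ∀ k, (L k).IsHomogeneous 1) (hf : f = ∑ k, C (mu k) * L k ^ d) :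
    fRank d f ≤ r ∨ fRank (d - 1) (pderiv 0 f) < r := by
  choose a b hab using fun k => (hL k).exists_eq_C_mul_X_zero_add_C_mul_X_one
  simp only [hab] at hf
  by_cases ha : ∃ j, a j = 0
  · right
    obtain ⟨j, hj⟩ := ha
    refine fRank_lt_of_eq_sum_of_eq_zero (fun k => mu k * a k ^ d * d) (fun k => b k / a k) ?_
      (j := j) (by simp [hj, hd])
    simp only [hf, map_sum, pderiv_zero_C_mul_linear_pow hd]
  · left
    refine Nat.sInf_le ⟨fun k => mu k * a k ^ d, fun k => b k / a k, hf.trans ?_⟩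
    exact sum_congr rfl fun k _ => C_mul_linear_pow_eq fun hk => ha ⟨k, hk⟩

lemma exists_eq_sum_add_C_mul_X_one_pow (hd : d ≠ 0) (hf : f.IsHomogeneous d) (lam β : Fin r → ℂ)
    (hfx : pderiv 0 f = ∑ k, C (lam k) * linForm (β k) ^ (d - 1)) :
    ∃ c, f = ∑ k, C (lam k / d) * linForm (β k) ^ d + C c * X 1 ^ d := by
  set g := ∑ k, C (lam k / d) * linForm (β k) ^ d
  have hg : g.IsHomogeneous d := IsHomogeneous.sum _ _ _ fun k _ => by
    simpa using ((isHomogeneous_linForm (β k)).pow d).C_mul (lam k / d)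
  have hgx : pderiv 0 g = pderiv 0 f := by
    rw [pderiv_zero_sum_C_mul_linForm_pow, hfx]
    simp only [div_mul_cancel₀ _ (Nat.cast_ne_zero.2 hd : (d : ℂ) ≠ 0)]
  refine ⟨_, eq_add_of_sub_eq' ((hf.sub hg).eq_C_mul_X_one_pow_of_pderiv_zero_eq_zero ?_)⟩
  rw [map_sub, hgx, sub_self]

lemma exists_eq_sum_linear_pow_of_pderiv_eq_sum (hd : d ≠ 0) (hf : f.IsHomogeneous d)
    (lam β : Fin r → ℂ) (hfx : pderiv 0 f = ∑ k, C (lam k) * linForm (β k) ^ (d - 1)) :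
    ∃ (c : Fin (r + 1) → ℂ) (L : Fin (r + 1) → MvPolynomial (Fin 2) ℂ),
      (∀ k, (L k).IsHomogeneous 1) ∧ f = ∑ k, C (c k) * L k ^ d := by
  obtain ⟨c, hc⟩ := exists_eq_sum_add_C_mul_X_one_pow hd hf lam β hfx
  refine ⟨Fin.snoc (fun k => lam k / d) c, Fin.snoc (fun k => linForm (β k)) (X 1), ?_, ?_⟩
  · exact Fin.lastCases (by simpa using isHomogeneous_X ℂ 1)
      fun k => by simpa using isHomogeneous_linForm (β k)
  · simpa [Fin.sum_univ_castSucc] using hc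

end rank

theorem waringRank_eq_fRank_deriv_add_one_general (d : ℕ) (hd : 1 ≤ d) (f : MvPolynomial (Fin 2) ℂ)
    (hf : f.IsHomogeneous d)
    (h : fRank (d - 1) (pderiv (0 : Fin 2) f) < fRank d f) :
    waringRank d f = fRank (d - 1) (pderiv (0 : Fin 2) f) + 1 := by
  have hd0 : d ≠ 0 := by omega
  obtain ⟨r, lam, β, hf_sum⟩ := Nat.nonempty_of_pos_sInf (Nat.zero_lt_of_lt h)
  obtain ⟨lam', β', hfx⟩ := exists_eq_sum_fRank
    ⟨r, _, β, (congrArg (pderiv 0) hf_sum).trans (pderiv_zero_sum_C_mul_linForm_pow lam β)⟩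
  obtain ⟨c, L, hL, hfL⟩ := exists_eq_sum_linear_pow_of_pderiv_eq_sum hd0 hf lam' β' hfx
  obtain ⟨mu, L', -, hL', hW⟩ := exists_eq_sum_waringRank_of_eq_sum c L hL hfL
  have hle := waringRank_le_of_eq_sum c L hL hfL
  rcases fRank_le_or_fRank_pderiv_lt hd0 mu L' hL' hW with h' | h' <;> omega

/-- For a nonzero binary form `f ∈ ℂ[x,y]_d`, `d ≥ 1`, with `f_x = ∂f/∂x`:
if `FR(f) > FR(f_x)` then `WR(f) = FR(f_x) + 1`. -/
theorem waringRank_eq_fRank_deriv_add_one (d : ℕ) (hd : 1 ≤ d) (f : MvPolynomial (Fin 2) ℂ)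
    (hf : f.IsHomogeneous d) (hf0 : f ≠ 0)
    (h : fRank (d - 1) (pderiv (0 : Fin 2) f) < fRank d f) :
    waringRank d f = fRank (d - 1) (pderiv (0 : Fin 2) f) + 1 :=
  waringRank_eq_fRank_deriv_add_one_general d hd f hf h
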